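/- Let G be a loopless finite graph (parallel edges allowed) and let Θ be the kernel of the action of Aut(G) on V(G). Then Aut(G) has a subgroup Σ acting faithfully on V(G) such that Aut(G) = ΣΘ and Σ ∩ Θ = {1}. -/

import Mathlib

/-! An automorphism of `G` moves parallel classes onto parallel classes, so its vertex part
preserves every edge multiplicity. Fix once and for all an enumeration of each parallel class.
Then every multiplicity-preserving vertex permutation `σ` lifts canonically to the edges, sending
the `i`-th edge between `u` and `v` to the `i`-th edge between `σ u` and `σ v`. The lift is a
homomorphism, so the pairs `(σ, lift σ)` form a subgroup meeting `Θ` trivially, and any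
automorphism `g` factors as `(g.1, lift g.1)` times an element of `Θ`. -/

/-- A multigraph: an abstract edge set `E` together with an assignment of an unordered
pair of end-vertices to each edge. Loops and parallel edges are allowed. -/
structure Multigraph (V E : Type*) where
  ends : E → Sym2 V

namespace Multigraph

variable {V E : Type*}

/-- A multigraph is loopless if no edge is a loop. -/
def Loopless (G : Multigraph V E) : Prop := ∀ e, ¬ (G.ends e).IsDiag

/-- Two vertices are adjacent if some edge joins them. -/
def Adj (G : Multigraph V E) (v w : V) : Prop := ∃ e, G.ends e = s(v, w)

/-- A multigraph is connected if any two vertices are joined by a walk. -/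
def Connected (G : Multigraph V E) : Prop := ∀ v w : V, Relation.ReflTransGen G.Adj v w

open Classical in
/-- The number of times edge `e` is incident with vertex `v` (a loop counts twice). -/
noncomputable def incCount (G : Multigraph V E) (v : V) (e : E) : ℕ :=
  if G.ends e = Sym2.diag v then 2 else if v ∈ G.ends e then 1 else 0

/-- The degree of a vertex. -/
noncomputable def degree (G : Multigraph V E) [Fintype E] (v : V) : ℕ :=
  ∑ e, G.incCount v e

open Classical in
/-- The degree of a vertex in the spanning subgraph with edge set `S`. -/
noncomputable def degreeIn (G : Multigraph V E) [Fintype E] (S : Set E) (v : V) : ℕ :=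
  ∑ e, if e ∈ S then G.incCount v e else 0

/-- An orientation of a multigraph: each edge gets a tail and a head realizing its ends. -/
structure Orientation (G : Multigraph V E) where
  tail : E → V
  head : E → V
  consistent : ∀ e, G.ends e = s(tail e, head e)

open Classical in
/-- Sum of `φ` over the edges with tail `v`. -/
noncomputable def outflow [Fintype E] {G : Multigraph V E} (D : G.Orientation)
    (φ : E → ℤ) (v : V) : ℤ :=
  ∑ e, if D.tail e = v then φ e else 0

open Classical in
/-- Sum of `φ` over the edges with head `v`. -/
noncomputable def inflow [Fintype E] {G : Multigraph V E} (D : G.Orientation)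
    (φ : E → ℤ) (v : V) : ℤ :=
  ∑ e, if D.head e = v then φ e else 0

/-- `(D, φ)` is a `k`-flow: all values have absolute value `< k` and flow is conserved. -/
def IsFlow [Fintype E] {G : Multigraph V E} (D : G.Orientation) (φ : E → ℤ) (k : ℕ) : Prop :=
  (∀ e, |φ e| < (k : ℤ)) ∧ ∀ v : V, outflow D φ v = inflow D φ v

/-- `G` admits a nowhere-zero `k`-flow. -/
def HasNowhereZeroFlow (G : Multigraph V E) [Fintype E] (k : ℕ) : Prop :=
  ∃ (D : G.Orientation) (φ : E → ℤ), IsFlow D φ k ∧ ∀ e, φ e ≠ 0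

/-- The automorphism group of a multigraph, as a subgroup of `Perm V × Perm E`:
pairs of permutations compatible with the incidence structure. -/
def aut (G : Multigraph V E) : Subgroup (Equiv.Perm V × Equiv.Perm E) where
  carrier := {p | ∀ e, G.ends (p.2 e) = (G.ends e).map p.1}
  one_mem' := by
    intro e
    simp
  mul_mem' := by
    intro p q hp hq e
    have h1 := hp (q.2 e)
    have h2 := hq e
    simp only [Prod.snd_mul, Prod.fst_mul, Equiv.Perm.mul_apply, Equiv.Perm.coe_mul]
    rw [h1, h2, Sym2.map_map]
  inv_mem' := by
    intro p hp e
    have h := hp ((p.2)⁻¹ e)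
    simp only [Equiv.Perm.inv_def, Equiv.apply_symm_apply] at h
    rw [Prod.snd_inv, Prod.fst_inv, h, Sym2.map_map]
    have : (⇑(p.1)⁻¹ ∘ ⇑p.1) = id := by
      ext x; simp
    rw [this, Sym2.map_id, id_eq, Equiv.Perm.inv_def]

end Multigraph

open Equiv Function

section FiberLift

variable {E Y : Type*} (f : E → Y)

noncomputable def fiberCard (y : Y) : ℕ := Nat.card {e // f e = y}

lemma fiberCard_apply_eq_of_semiconj (ε : Perm E) (τ : Perm Y) (h : ∀ e, f (ε e) = τ (f e))
    (y : Y) : fiberCard f (τ y) = fiberCard f y :=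
  Nat.card_congr <| (ε.subtypeEquiv fun e => by rw [h, τ.apply_eq_iff_eq]).symm

def fiberCardStabilizer : Subgroup (Perm Y) where
  carrier := {τ | ∀ y, fiberCard f (τ y) = fiberCard f y}
  one_mem' _ := rfl
  mul_mem' {σ τ} hσ hτ y := (hσ (τ y)).trans (hτ y)
  inv_mem' {τ} hτ y := by simpa using (hτ (τ⁻¹ y)).symm

variable [Finite E]

noncomputable def fiberEnumeration : E ≃ Σ y, Fin (fiberCard f y) :=
  (Equiv.sigmaFiberEquiv f).symm.trans (Equiv.sigmaCongrRight fun _ => Finite.equivFin _)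

/-- The fibre of `e` and its position in a fixed enumeration of that fibre. A permutation of `Y`
preserving fibre sizes lifts canonically to `E` by keeping positions. -/
noncomputable def fiberLabel (e : E) : Y × ℕ :=
  ((fiberEnumeration f e).1, (fiberEnumeration f e).2)

lemma fiberLabel_snd_lt (e : E) : (fiberLabel f e).2 < fiberCard f (f e) :=
  Fin.isLt _

lemma fiberLabel_injective : Injective (fiberLabel f) := by
  intro e e' h
  obtain ⟨hy, hi⟩ := Prod.mk.inj h
  exact (fiberEnumeration f).injective (Sigma.ext hy ((Fin.heq_ext_iff (congrArg _ hy)).2 hi))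

lemma mem_range_fiberLabel {y : Y} {i : ℕ} (hi : i < fiberCard f y) :
    (y, i) ∈ Set.range (fiberLabel f) :=
  ⟨(fiberEnumeration f).symm ⟨y, ⟨i, hi⟩⟩, by rw [fiberLabel, Equiv.apply_symm_apply]⟩

variable {f}

lemma snd_fiberLabel_lt_fiberCard_apply (τ : fiberCardStabilizer f) (e : E) :
    (fiberLabel f e).2 < fiberCard f (τ.1 (f e)) := by
  rw [τ.2]; exact fiberLabel_snd_lt f e

noncomputable def liftFun (τ : fiberCardStabilizer f) (e : E) : E :=
  (Equiv.ofInjective _ (fiberLabel_injective f)).symm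
    ⟨_, mem_range_fiberLabel f (snd_fiberLabel_lt_fiberCard_apply τ e)⟩

lemma fiberLabel_liftFun (τ : fiberCardStabilizer f) (e : E) :
    fiberLabel f (liftFun τ e) = (τ.1 (f e), (fiberLabel f e).2) :=
  Equiv.apply_ofInjective_symm _ _

lemma apply_liftFun (τ : fiberCardStabilizer f) (e : E) : f (liftFun τ e) = τ.1 (f e) :=
  congrArg Prod.fst (fiberLabel_liftFun τ e)

variable (f)

noncomputable def liftPerm : fiberCardStabilizer f →* Perm E :=
  MonoidHom.toHomPerm
    { toFun := liftFun
      map_one' := funext fun e => fiberLabel_injective f (fiberLabel_liftFun 1 e)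
      map_mul' σ τ := funext fun e => fiberLabel_injective f <| by
        change fiberLabel f (liftFun (σ * τ) e) = fiberLabel f (liftFun σ (liftFun τ e))
        simp [fiberLabel_liftFun, apply_liftFun] }

lemma apply_liftPerm (τ : fiberCardStabilizer f) (e : E) : f (liftPerm f τ e) = τ.1 (f e) :=
  apply_liftFun τ e

end FiberLift

namespace Equiv.Perm

variable {V : Type*}

def sym2Hom : Perm V →* Perm (Sym2 V) where
  toFun σ :=
    { toFun := Sym2.map σ
      invFun := Sym2.map σ.symm
      left_inv p := by simp [Sym2.map_map]
      right_inv p := by simp [Sym2.map_map] }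
  map_one' := by ext p; simp
  map_mul' σ τ := by ext p; simp [Sym2.map_map]

end Equiv.Perm

namespace Multigraph

variable {V E : Type*} (G : Multigraph V E)

def multiplicityPreserving : Subgroup (Perm V) :=
  (fiberCardStabilizer G.ends).comap Perm.sym2Hom

lemma fst_mem_multiplicityPreserving {g : Perm V × Perm E} (hg : g ∈ G.aut) :
    g.1 ∈ G.multiplicityPreserving :=
  fiberCard_apply_eq_of_semiconj G.ends g.2 (Perm.sym2Hom g.1) hg

variable [Finite E]

noncomputable def liftAut : G.multiplicityPreserving →* Perm V × Perm E :=
  G.multiplicityPreserving.subtype.prod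
    ((liftPerm G.ends).comp (Perm.sym2Hom.subgroupComap (fiberCardStabilizer G.ends)))

lemma liftAut_fst (σ : G.multiplicityPreserving) : (G.liftAut σ).1 = σ := rfl

lemma liftAut_mem_aut (σ : G.multiplicityPreserving) : G.liftAut σ ∈ G.aut :=
  apply_liftPerm G.ends _

end Multigraph

open Multigraph in
theorem stmt10_general {V E : Type*} [Fintype E]
    (G : Multigraph V E) :
    ∃ S : Subgroup (Equiv.Perm V × Equiv.Perm E),
      S ≤ G.aut ∧
      (∀ p ∈ S, p.1 = 1 → p = 1) ∧
      S ⊓ (G.aut ⊓ (MonoidHom.fst (Equiv.Perm V) (Equiv.Perm E)).ker) = ⊥ ∧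
      (∀ g ∈ G.aut, ∃ s ∈ S,
        ∃ t ∈ G.aut ⊓ (MonoidHom.fst (Equiv.Perm V) (Equiv.Perm E)).ker, g = s * t) := by
  have faithful : ∀ p ∈ G.liftAut.range, p.1 = 1 → p = 1 := by
    rintro _ ⟨σ, rfl⟩ hσ
    obtain rfl : σ = 1 := Subtype.ext hσ
    exact map_one _
  refine ⟨G.liftAut.range, ?_, faithful, ?_, fun g hg => ?_⟩
  · rintro _ ⟨σ, rfl⟩
    exact G.liftAut_mem_aut σ
  · rw [eq_bot_iff]
    rintro p ⟨hpS, -, hp⟩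
    exact faithful p hpS hp
  · set s := G.liftAut ⟨g.1, G.fst_mem_multiplicityPreserving hg⟩
    refine ⟨s, ⟨_, rfl⟩, s⁻¹ * g, ⟨G.aut.mul_mem (G.aut.inv_mem (G.liftAut_mem_aut _)) hg, ?_⟩,
      (mul_inv_cancel_left s g).symm⟩
    show s.1⁻¹ * g.1 = 1
    rw [G.liftAut_fst, inv_mul_cancel]

open Multigraph in
/-- Let G be a loopless finite graph (parallel edges allowed) and Θ the kernel of the
action of Aut(G) on the vertices. Then Aut(G) has a subgroup Σ acting faithfully on the
vertices with Aut(G) = ΣΘ and Σ ∩ Θ = 1. -/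
theorem stmt10 {V E : Type*} [Fintype V] [Fintype E]
    (G : Multigraph V E) (hloopless : G.Loopless) :
    ∃ S : Subgroup (Equiv.Perm V × Equiv.Perm E),
      S ≤ G.aut ∧
      (∀ p ∈ S, p.1 = 1 → p = 1) ∧
      S ⊓ (G.aut ⊓ (MonoidHom.fst (Equiv.Perm V) (Equiv.Perm E)).ker) = ⊥ ∧
      (∀ g ∈ G.aut, ∃ s ∈ S,
        ∃ t ∈ G.aut ⊓ (MonoidHom.fst (Equiv.Perm V) (Equiv.Perm E)).ker, g = s * t) :=
  stmt10_general G
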